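/- Resolvent kernel identity: let λ ∈ ℂ and let v₁, v₂ : ℤ → ℂ² satisfy v_j(x+1) = T_λ(x)·v_j(x) for all x ∈ ℤ, and suppose W := det(v₁(0) | v₂(0)) ≠ 0. Define the 2×2 matrix K_λ(x,y) := e^{−iλ}·W⁻¹·( v₂(x)·v₁(y)ᵀ·[[0, χ(x<y)], [χ(x≤y), 0]] + v₁(x)·v₂(y)ᵀ·[[0, χ(x≥y)], [χ(x>y), 0]] ), where χ(P) = 1 if P holds and 0 otherwise and v·wᵀ denotes the outer product of column vectors. Then for every y ∈ ℤ and every c ∈ ℂ², setting w(x) = K_λ(x,y)·c and f := J⁻¹w (i.e. f(x) = (w₂(x), w₁(x+1))), one has (J(Uf − e^{iλ}f))(x) = c if x = y and (J(Uf − e^{iλ}f))(x) = 0 if x ≠ y. -/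

import Mathlib

open Complex ComplexConjugate

/-!
Conjugating by `J` turns `U - e^{iλ}` into a first-order difference operator whose kernel
consists of the solutions of the transfer-matrix recursion. The kernel `K_λ(·, y) c` is `J` of
a function that is `J⁻¹` of a multiple of `v₂` left of `y` and `J⁻¹` of a multiple of `v₁` from
`y` on, so the operator vanishes away from `y`, and at `y` it only sees the jump between the two
branches. That jump is `e^{iλ}` times the Wronskian of `v₁, v₂` at `y` times `c`; the Wronskian
is constant because `det T_λ = 1`, so the normalisation `e^{-iλ} W⁻¹` turns the jump into `c`.
-/

section TransferSolution

variable {α : ℤ → ℂ} {ρ : ℤ → ℝ} {e : ℂ}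

/-- `v (x + 1) = T(x) v x`, where `e` plays the role of `e^{iλ}`. -/
def IsTransferSolution (α : ℤ → ℂ) (ρ : ℤ → ℝ) (e : ℂ) (v : ℤ → ℂ × ℂ) : Prop :=
  ∀ x, v (x + 1) = ((ρ x : ℂ)⁻¹ * (e * (v x).1 + α x * (v x).2),
    (ρ x : ℂ)⁻¹ * (conj (α x) * (v x).1 + e⁻¹ * (v x).2))

/-- `J (U - e) J⁻¹ w`, written out entrywise. -/
def conjWalkSub (α : ℤ → ℂ) (ρ : ℤ → ℝ) (e : ℂ) (w : ℤ → ℂ × ℂ) (x : ℤ) : ℂ × ℂ :=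
  (ρ x * (w (x + 1)).1 - α x * (w x).2 - e * (w x).1,
    ρ (x - 1) * (w (x - 1)).2 + conj (α (x - 1)) * (w x).1 - e * (w x).2)

def wronskian (v₁ v₂ : ℤ → ℂ × ℂ) (x : ℤ) : ℂ :=
  (v₁ x).1 * (v₂ x).2 - (v₁ x).2 * (v₂ x).1

/-- `J` of the function equal to `J⁻¹ a` on `x < y` and to `J⁻¹ b` on `y ≤ x`. -/
def joinAt (y : ℤ) (a b : ℤ → ℂ × ℂ) (x : ℤ) : ℂ × ℂ :=
  (if x ≤ y then (a x).1 else (b x).1, if x < y then (a x).2 else (b x).2)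

/-- `resolventKernel (e^{-iλ} W⁻¹) v₁ v₂ y c x = K_λ(x, y) c`. -/
def resolventKernel (C : ℂ) (v₁ v₂ : ℤ → ℂ × ℂ) (y : ℤ) (c : ℂ × ℂ) (x : ℤ) : ℂ × ℂ :=
  C • ((((v₁ y).1 * (if x < y then (1 : ℂ) else 0) * c.2
      + (v₁ y).2 * (if x ≤ y then (1 : ℂ) else 0) * c.1) • v₂ x)
    + (((v₂ y).1 * (if y ≤ x then (1 : ℂ) else 0) * c.2
      + (v₂ y).2 * (if y < x then (1 : ℂ) else 0) * c.1) • v₁ x))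

theorem ofReal_sq_add_mul_conj {r : ℝ} {a : ℂ} (h : r ^ 2 + ‖a‖ ^ 2 = 1) :
    (r : ℂ) ^ 2 + a * conj a = 1 := by
  rw [mul_conj, normSq_eq_norm_sq]
  exact_mod_cast h

namespace IsTransferSolution

variable {v v₁ v₂ : ℤ → ℂ × ℂ}

theorem smul (h : IsTransferSolution α ρ e v) (p : ℂ) : IsTransferSolution α ρ e (p • v) := by
  intro x
  ext <;> simp only [Pi.smul_apply, Prod.smul_fst, Prod.smul_snd, smul_eq_mul, h x] <;> ring

theorem rho_mul_fst_succ (h : IsTransferSolution α ρ e v) (hρ0 : ∀ x, ρ x ≠ 0) (x : ℤ) :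
    ρ x * (v (x + 1)).1 = e * (v x).1 + α x * (v x).2 := by
  rw [h x]
  field_simp [hρ0 x]

theorem rho_mul_snd_pred (h : IsTransferSolution α ρ e v) (hρ0 : ∀ x, ρ x ≠ 0)
    (hρα : ∀ x, ρ x ^ 2 + ‖α x‖ ^ 2 = 1) (he : e ≠ 0) (x : ℤ) :
    ρ (x - 1) * (v (x - 1)).2 = e * (v x).2 - conj (α (x - 1)) * (v x).1 := by
  have hx := h (x - 1)
  rw [sub_add_cancel] at hx
  rw [hx]
  field_simp [hρ0 (x - 1)]
  linear_combination (v (x - 1)).2 * ofReal_sq_add_mul_conj (hρα (x - 1))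

theorem conjWalkSub_eq_zero (h : IsTransferSolution α ρ e v) (hρ0 : ∀ x, ρ x ≠ 0)
    (hρα : ∀ x, ρ x ^ 2 + ‖α x‖ ^ 2 = 1) (he : e ≠ 0) (x : ℤ) :
    conjWalkSub α ρ e v x = 0 := by
  have h₁ := h.rho_mul_fst_succ hρ0 x
  have h₂ := h.rho_mul_snd_pred hρ0 hρα he x
  ext
  · simp only [conjWalkSub, Prod.fst_zero]
    linear_combination h₁
  · simp only [conjWalkSub, Prod.snd_zero]
    linear_combination h₂

/-- `det T(x) = ρ(x)⁻² (1 - |α(x)|²) = 1`. -/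
theorem wronskian_succ (h₁ : IsTransferSolution α ρ e v₁) (h₂ : IsTransferSolution α ρ e v₂)
    (hρ0 : ∀ x, ρ x ≠ 0) (hρα : ∀ x, ρ x ^ 2 + ‖α x‖ ^ 2 = 1) (he : e ≠ 0) (x : ℤ) :
    wronskian v₁ v₂ (x + 1) = wronskian v₁ v₂ x := by
  simp only [wronskian, h₁ x, h₂ x]
  field_simp [hρ0 x]
  linear_combination
    -e * ((v₁ x).1 * (v₂ x).2 - (v₁ x).2 * (v₂ x).1) * ofReal_sq_add_mul_conj (hρα x)

theorem wronskian_eq (h₁ : IsTransferSolution α ρ e v₁) (h₂ : IsTransferSolution α ρ e v₂)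
    (hρ0 : ∀ x, ρ x ≠ 0) (hρα : ∀ x, ρ x ^ 2 + ‖α x‖ ^ 2 = 1) (he : e ≠ 0) (x : ℤ) :
    wronskian v₁ v₂ x = wronskian v₁ v₂ 0 := by
  have hper : Function.Periodic (wronskian v₁ v₂) 1 := h₁.wronskian_succ h₂ hρ0 hρα he
  simpa using hper.int_mul_eq x

end IsTransferSolution

theorem conjWalkSub_joinAt {a b : ℤ → ℂ × ℂ} (ha : IsTransferSolution α ρ e a)
    (hb : IsTransferSolution α ρ e b) (hρ0 : ∀ x, ρ x ≠ 0)
    (hρα : ∀ x, ρ x ^ 2 + ‖α x‖ ^ 2 = 1) (he : e ≠ 0) (y x : ℤ) :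
    conjWalkSub α ρ e (joinAt y a b) x
      = if x = y then e • ((b y).1 - (a y).1, (a y).2 - (b y).2) else 0 := by
  rcases lt_trichotomy x y with hlt | rfl | hgt
  · have hleft : conjWalkSub α ρ e (joinAt y a b) x = conjWalkSub α ρ e a x := by
      simp [conjWalkSub, joinAt, hlt, hlt.le, show x + 1 ≤ y by omega, show x - 1 < y by omega]
    rw [hleft, ha.conjWalkSub_eq_zero hρ0 hρα he, if_neg hlt.ne]
  · have h₁ := hb.rho_mul_fst_succ hρ0 x
    have h₂ := ha.rho_mul_snd_pred hρ0 hρα he x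
    simp only [conjWalkSub, joinAt, le_refl, lt_irrefl, show ¬ x + 1 ≤ x by omega,
      show x - 1 < x by omega, if_false, if_pos, Prod.smul_mk, smul_eq_mul]
    ext
    · linear_combination h₁
    · linear_combination h₂
  · have hright : conjWalkSub α ρ e (joinAt y a b) x = conjWalkSub α ρ e b x := by
      simp [conjWalkSub, joinAt, show ¬ x ≤ y by omega, show ¬ x < y by omega,
        show ¬ x + 1 ≤ y by omega, show ¬ x - 1 < y by omega]
    rw [hright, hb.conjWalkSub_eq_zero hρ0 hρα he, if_neg hgt.ne']

theorem resolventKernel_eq_joinAt (C : ℂ) (v₁ v₂ : ℤ → ℂ × ℂ) (y : ℤ) (c : ℂ × ℂ) :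
    resolventKernel C v₁ v₂ y c
      = joinAt y ((C * ((v₁ y).1 * c.2 + (v₁ y).2 * c.1)) • v₂)
          ((C * ((v₂ y).1 * c.2 + (v₂ y).2 * c.1)) • v₁) := by
  funext x
  ext <;> simp only [resolventKernel, joinAt, Prod.smul_fst, Prod.smul_snd, Prod.fst_add,
    Prod.snd_add, Pi.smul_apply, smul_eq_mul] <;> split_ifs <;>
    first | omega | ring1 | (obtain rfl : x = y := by omega); ring

theorem conjWalkSub_resolventKernel {v₁ v₂ : ℤ → ℂ × ℂ} (h₁ : IsTransferSolution α ρ e v₁)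
    (h₂ : IsTransferSolution α ρ e v₂) (hρ0 : ∀ x, ρ x ≠ 0)
    (hρα : ∀ x, ρ x ^ 2 + ‖α x‖ ^ 2 = 1) (he : e ≠ 0) (C : ℂ) (y : ℤ) (c : ℂ × ℂ) (x : ℤ) :
    conjWalkSub α ρ e (resolventKernel C v₁ v₂ y c) x
      = if x = y then (e * C * wronskian v₁ v₂ y) • c else 0 := by
  rw [resolventKernel_eq_joinAt, conjWalkSub_joinAt (h₂.smul _) (h₁.smul _) hρ0 hρα he]
  split_ifs
  · ext <;> simp only [wronskian, Pi.smul_apply, Prod.smul_fst, Prod.smul_snd, Prod.smul_mk,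
      smul_eq_mul] <;> ring
  · rfl

end TransferSolution

theorem resolvent_kernel_identity_general
    (α : ℤ → ℂ) (h02 : ∀ x : ℤ, ‖α x‖ < 1)
    (ρ : ℤ → ℝ) (hρ : ∀ x : ℤ, ρ x = Real.sqrt (1 - ‖α x‖ ^ 2))
    (lam : ℂ) (v₁ v₂ : ℤ → ℂ × ℂ)
    (hv₁ : ∀ x : ℤ, v₁ (x + 1)
      = ((ρ x : ℂ)⁻¹ * (Complex.exp (Complex.I * lam) * (v₁ x).1 + α x * (v₁ x).2),
          (ρ x : ℂ)⁻¹ * ((starRingEnd ℂ) (α x) * (v₁ x).1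
            + Complex.exp (-(Complex.I * lam)) * (v₁ x).2)))
    (hv₂ : ∀ x : ℤ, v₂ (x + 1)
      = ((ρ x : ℂ)⁻¹ * (Complex.exp (Complex.I * lam) * (v₂ x).1 + α x * (v₂ x).2),
          (ρ x : ℂ)⁻¹ * ((starRingEnd ℂ) (α x) * (v₂ x).1
            + Complex.exp (-(Complex.I * lam)) * (v₂ x).2)))
    (W : ℂ) (hW : W = (v₁ 0).1 * (v₂ 0).2 - (v₁ 0).2 * (v₂ 0).1) (hW0 : W ≠ 0)
    (y : ℤ) (c : ℂ × ℂ)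
    -- `w x = K_λ(x,y) c`, written out entrywise
    (w : ℤ → ℂ × ℂ)
    (hw : ∀ x : ℤ, w x
      = (Complex.exp (-(Complex.I * lam)) * W⁻¹) •
          ((((v₁ y).1 * (if x < y then (1 : ℂ) else 0) * c.2
              + (v₁ y).2 * (if x ≤ y then (1 : ℂ) else 0) * c.1) • v₂ x)
            + (((v₂ y).1 * (if y ≤ x then (1 : ℂ) else 0) * c.2
              + (v₂ y).2 * (if y < x then (1 : ℂ) else 0) * c.1) • v₁ x)))
    -- `f = J⁻¹ w`
    (f : ℤ → ℂ × ℂ) (hf : ∀ x : ℤ, f x = ((w x).2, (w (x + 1)).1))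
    -- `g = U f − e^{iλ} f`
    (g : ℤ → ℂ × ℂ)
    (hg : ∀ x : ℤ, g x
      = ((ρ (x - 1) : ℂ) * (f (x - 1)).1 + (starRingEnd ℂ) (α (x - 1)) * (f (x - 1)).2
            - Complex.exp (Complex.I * lam) * (f x).1,
          -(α (x + 1)) * (f (x + 1)).1 + (ρ (x + 1) : ℂ) * (f (x + 1)).2
            - Complex.exp (Complex.I * lam) * (f x).2)) :
    ∀ x : ℤ, (((g (x - 1)).2, (g x).1) : ℂ × ℂ) = if x = y then c else 0 := by
  intro x
  have hρ0 : ∀ z, ρ z ≠ 0 := fun z => by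
    rw [hρ]
    exact (Real.sqrt_pos.mpr (by nlinarith [h02 z, norm_nonneg (α z)])).ne'
  have hρα : ∀ z, ρ z ^ 2 + ‖α z‖ ^ 2 = 1 := fun z => by
    rw [hρ, Real.sq_sqrt (by nlinarith [h02 z, norm_nonneg (α z)])]
    ring
  have h₁ : IsTransferSolution α ρ (exp (I * lam)) v₁ := fun z => by rw [hv₁ z, exp_neg]
  have h₂ : IsTransferSolution α ρ (exp (I * lam)) v₂ := fun z => by rw [hv₂ z, exp_neg]
  have hJ : ((g (x - 1)).2, (g x).1) = conjWalkSub α ρ (exp (I * lam)) w x := by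
    simp only [hg, hf, sub_add_cancel, conjWalkSub]
    ext <;> ring
  have hK : w = resolventKernel (exp (-(I * lam)) * W⁻¹) v₁ v₂ y c := funext hw
  have hnorm : exp (I * lam) * (exp (-(I * lam)) * W⁻¹) * wronskian v₁ v₂ y = 1 := by
    rw [h₁.wronskian_eq h₂ hρ0 hρα (exp_ne_zero _), wronskian, ← hW, exp_neg]
    field_simp
  rw [hJ, hK, conjWalkSub_resolventKernel h₁ h₂ hρ0 hρα (exp_ne_zero _), hnorm, one_smul]

/-- Resolvent kernel identity: if `v₁, v₂` solve the transfer-matrix recursion with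
nonvanishing Wronskian `W`, then the kernel `K_λ(x,y)` built from them inverts
`U − e^{iλ}` in the sense that `(J((U − e^{iλ})(J⁻¹ K_λ(·,y)c)))(x) = δ_{xy} c`. -/
theorem resolvent_kernel_identity
    (α : ℤ → ℂ) (h01 : ∀ x : ℤ, 0 < ‖α x‖) (h02 : ∀ x : ℤ, ‖α x‖ < 1)
    (ρ : ℤ → ℝ) (hρ : ∀ x : ℤ, ρ x = Real.sqrt (1 - ‖α x‖ ^ 2))
    (lam : ℂ) (v₁ v₂ : ℤ → ℂ × ℂ)
    (hv₁ : ∀ x : ℤ, v₁ (x + 1)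
      = ((ρ x : ℂ)⁻¹ * (Complex.exp (Complex.I * lam) * (v₁ x).1 + α x * (v₁ x).2),
          (ρ x : ℂ)⁻¹ * ((starRingEnd ℂ) (α x) * (v₁ x).1
            + Complex.exp (-(Complex.I * lam)) * (v₁ x).2)))
    (hv₂ : ∀ x : ℤ, v₂ (x + 1)
      = ((ρ x : ℂ)⁻¹ * (Complex.exp (Complex.I * lam) * (v₂ x).1 + α x * (v₂ x).2),
          (ρ x : ℂ)⁻¹ * ((starRingEnd ℂ) (α x) * (v₂ x).1
            + Complex.exp (-(Complex.I * lam)) * (v₂ x).2)))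
    (W : ℂ) (hW : W = (v₁ 0).1 * (v₂ 0).2 - (v₁ 0).2 * (v₂ 0).1) (hW0 : W ≠ 0)
    (y : ℤ) (c : ℂ × ℂ)
    -- `w x = K_λ(x,y) c`, written out entrywise
    (w : ℤ → ℂ × ℂ)
    (hw : ∀ x : ℤ, w x
      = (Complex.exp (-(Complex.I * lam)) * W⁻¹) •
          ((((v₁ y).1 * (if x < y then (1 : ℂ) else 0) * c.2
              + (v₁ y).2 * (if x ≤ y then (1 : ℂ) else 0) * c.1) • v₂ x)
            + (((v₂ y).1 * (if y ≤ x then (1 : ℂ) else 0) * c.2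
              + (v₂ y).2 * (if y < x then (1 : ℂ) else 0) * c.1) • v₁ x)))
    -- `f = J⁻¹ w`
    (f : ℤ → ℂ × ℂ) (hf : ∀ x : ℤ, f x = ((w x).2, (w (x + 1)).1))
    -- `g = U f − e^{iλ} f`
    (g : ℤ → ℂ × ℂ)
    (hg : ∀ x : ℤ, g x
      = ((ρ (x - 1) : ℂ) * (f (x - 1)).1 + (starRingEnd ℂ) (α (x - 1)) * (f (x - 1)).2
            - Complex.exp (Complex.I * lam) * (f x).1,
          -(α (x + 1)) * (f (x + 1)).1 + (ρ (x + 1) : ℂ) * (f (x + 1)).2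
            - Complex.exp (Complex.I * lam) * (f x).2)) :
    ∀ x : ℤ, (((g (x - 1)).2, (g x).1) : ℂ × ℂ) = if x = y then c else 0 :=
  resolvent_kernel_identity_general α h02 ρ hρ lam v₁ v₂ hv₁ hv₂ W hW hW0 y c w hw f hf g hg
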